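/- Let μ be the Gibbs distribution of a totally-connected q-state spin system on an n-vertex graph, let γ ≥ 1, let d be any metric on configurations that is γ-equivalent to the Hamming metric, and let κ ∈ (0,1). If μ is κ-contractive with respect to the family of Glauber dynamics (one chain for each pinning) and the metric d, then μ is spectrally independent with constant η = 2γ²/((1−κ)n). In particular, if κ ≤ 1 − ε/n then η ≤ 2γ²/ε. -/

import Mathlib

open scoped BigOperators
open Classical
noncomputable section

/-- Spin configurations on `n` vertices with `q` spin values. -/
abbrev Cfg (n q : ℕ) := Fin n → Fin q

/-! ### Generic finite probability notions -/

section Generic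
variable {Ω : Type*} [Fintype Ω]

/-- Expectation of `f` under the (finitely supported) distribution `π`. -/
def expec (π f : Ω → ℝ) : ℝ := ∑ s, π s * f s

/-- Entropy functional `Ent_π(f) = π[f log f] - π[f] log π[f]`. -/
def entOf (π f : Ω → ℝ) : ℝ :=
  expec π (fun s => f s * Real.log (f s)) - expec π f * Real.log (expec π f)

/-- `π` is a probability distribution. -/
def IsProb (π : Ω → ℝ) : Prop := (∀ s, 0 ≤ π s) ∧ ∑ s, π s = 1

/-- `P` is a stochastic (Markov transition) matrix. -/
def IsStochastic (P : Ω → Ω → ℝ) : Prop :=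
  (∀ s s', 0 ≤ P s s') ∧ ∀ s, ∑ s', P s s' = 1

/-- `π` is a stationary distribution for `P`. -/
def IsStationaryDist (P : Ω → Ω → ℝ) (π : Ω → ℝ) : Prop :=
  ∀ s', ∑ s, π s * P s s' = π s'

/-- `t`-step transition probabilities. -/
def matPow (P : Ω → Ω → ℝ) : ℕ → Ω → Ω → ℝ
  | 0 => fun s s' => if s = s' then 1 else 0
  | t + 1 => fun s s' => ∑ s'', matPow P t s s'' * P s'' s'

/-- Total variation distance of two distributions. -/
def tvDist (π ρ : Ω → ℝ) : ℝ := (∑ s, |π s - ρ s|) / 2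

/-- Mixing time `max_{X₀} min { t : ‖P^t(X₀,·) − π‖_TV ≤ 1/4 }`. -/
def mixingTime (P : Ω → Ω → ℝ) (π : Ω → ℝ) : ℕ :=
  Finset.univ.sup fun s0 => sInf {t : ℕ | tvDist (matPow P t s0) π ≤ 1/4}

/-- Dirichlet form `D_P(f,g) = ⟨f, (I-P) g⟩_π`. -/
def dirichletForm (P : Ω → Ω → ℝ) (π f g : Ω → ℝ) : ℝ :=
  ∑ s, π s * (f s * (g s - ∑ s', P s s' * g s'))

/-- The modified log-Sobolev inequality with constant `ρ`. -/
def MLSI (P : Ω → Ω → ℝ) (π : Ω → ℝ) (ρ : ℝ) : Prop :=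
  ∀ f : Ω → ℝ, (∀ s, 0 < f s) →
    ρ * entOf π f ≤ dirichletForm P π f (fun s => Real.log (f s))

/-- The standard log-Sobolev inequality with constant `c`. -/
def LSI (P : Ω → Ω → ℝ) (π : Ω → ℝ) (c : ℝ) : Prop :=
  ∀ f : Ω → ℝ, (∀ s, 0 ≤ f s) →
    c * entOf π f ≤ dirichletForm P π (fun s => Real.sqrt (f s)) (fun s => Real.sqrt (f s))

/-- `π` is a coupling of `μ` and `ν`. -/
def IsCoupling (π : Ω × Ω → ℝ) (μ ν : Ω → ℝ) : Prop :=
  (∀ p, 0 ≤ π p) ∧ (∀ s, ∑ s', π (s, s') = μ s) ∧ (∀ s', ∑ s, π (s, s') = ν s')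

/-- 1-Wasserstein distance of `μ` and `ν` with respect to `d`. -/
def W1 (d : Ω → Ω → ℝ) (μ ν : Ω → ℝ) : ℝ :=
  sInf {r | ∃ π : Ω × Ω → ℝ, IsCoupling π μ ν ∧ r = ∑ p, π p * d p.1 p.2}

/-- Optimal Lipschitz constant of `f` with respect to `d`. -/
def lipConst (d : Ω → Ω → ℝ) (f : Ω → ℝ) : ℝ :=
  sInf {L | 0 ≤ L ∧ ∀ a b, |f a - f b| ≤ L * d a b}

end Generic

/-- `d` is a metric (given as a real-valued distance function). -/
structure IsMetricFn {Ω : Type*} (d : Ω → Ω → ℝ) : Prop where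
  refl : ∀ a, d a a = 0
  pos : ∀ a b, a ≠ b → 0 < d a b
  symm : ∀ a b, d a b = d b a
  triangle : ∀ a b c, d a c ≤ d a b + d b c

/-! ### Spin systems -/

/-- Hamming distance between two configurations. -/
def hamming {n q : ℕ} (σ τ : Cfg n q) : ℕ :=
  (Finset.univ.filter fun x => σ x ≠ τ x).card

/-- The graph `G` has maximum degree at most `Δ`. -/
def maxDegreeLE {n : ℕ} (G : SimpleGraph (Fin n)) (Δ : ℕ) : Prop :=
  ∀ v : Fin n, (Finset.univ.filter fun u => G.Adj v u).card ≤ Δ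

/-- A `q`-state spin system on the `n`-vertex graph `G`, given by nonnegative symmetric
pairwise interactions `A` on the edges and nonnegative external fields `B`. -/
structure SpinSystem (n q : ℕ) where
  G : SimpleGraph (Fin n)
  A : Fin n → Fin n → Fin q → Fin q → ℝ
  B : Fin n → Fin q → ℝ
  A_nonneg : ∀ x y a b, 0 ≤ A x y a b
  A_symm : ∀ x y a b, A x y a b = A y x b a
  B_nonneg : ∀ x a, 0 ≤ B x a

namespace SpinSystem

variable {n q : ℕ}

/-- The weight of a configuration. -/
def wt (S : SpinSystem n q) (σ : Cfg n q) : ℝ :=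
  (∏ x : Fin n, ∏ y : Fin n,
      if x < y ∧ S.G.Adj x y then S.A x y (σ x) (σ y) else 1) *
    ∏ x : Fin n, S.B x (σ x)

/-- The weight of a configuration compatible with the pinning `τ` on `U`. -/
def condWt (S : SpinSystem n q) (U : Finset (Fin n)) (τ σ : Cfg n q) : ℝ :=
  if ∀ x ∈ U, σ x = τ x then S.wt σ else 0

/-- Conditional partition function given the pinning `τ` on `U`. -/
def condZ (S : SpinSystem n q) (U : Finset (Fin n)) (τ : Cfg n q) : ℝ :=
  ∑ σ : Cfg n q, S.condWt U τ σ

/-- The Gibbs distribution conditioned on the pinning `τ` on `U`. -/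
def condMu (S : SpinSystem n q) (U : Finset (Fin n)) (τ : Cfg n q) (σ : Cfg n q) : ℝ :=
  S.condWt U τ σ / S.condZ U τ

/-- The (unconditioned) Gibbs distribution. -/
def gibbs (S : SpinSystem n q) : Cfg n q → ℝ := fun σ => S.wt σ / ∑ σ' : Cfg n q, S.wt σ'

/-- `τ` restricted to `U` is a feasible pinning. -/
def IsPinning (S : SpinSystem n q) (U : Finset (Fin n)) (τ : Cfg n q) : Prop :=
  ∃ σ : Cfg n q, 0 < S.wt σ ∧ ∀ x ∈ U, σ x = τ x

/-- The marginal probability that the spin at `x` equals `a`, under the pinning `τ` on `U`. -/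
def margin (S : SpinSystem n q) (U : Finset (Fin n)) (τ : Cfg n q) (x : Fin n) (a : Fin q) : ℝ :=
  ∑ σ : Cfg n q, if σ x = a then S.condMu U τ σ else 0

/-- `(x,a)` is a feasible (unpinned) vertex-spin pair under the pinning `τ` on `U`. -/
def allowed (S : SpinSystem n q) (U : Finset (Fin n)) (τ : Cfg n q) (x : Fin n) (a : Fin q) :
    Prop :=
  x ∉ U ∧ 0 < S.margin U τ x a

/-- The ALO influence matrix `J^τ` of the pinned measure `μ^τ` (extended by `0` outside the
set of feasible vertex-spin pairs). -/
def Jmat (S : SpinSystem n q) (U : Finset (Fin n)) (τ : Cfg n q)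
    (p p' : Fin n × Fin q) : ℝ :=
  if p.1 = p'.1 then 0
  else if S.allowed U τ p.1 p.2 ∧ S.allowed U τ p'.1 p'.2 then
    S.margin (insert p.1 U) (Function.update τ p.1 p.2) p'.1 p'.2 - S.margin U τ p'.1 p'.2
  else 0

/-- Spectral independence: every (real) eigenvalue of every pinned influence matrix `J^τ`
is at most `η`. -/
def SpectrallyIndependent (S : SpinSystem n q) (η : ℝ) : Prop :=
  ∀ U τ, S.IsPinning U τ → ∀ (t : ℝ) (φ : Fin n × Fin q → ℝ),
    (∀ p, ¬ S.allowed U τ p.1 p.2 → φ p = 0) → φ ≠ 0 →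
    (∀ p, (∑ p' : Fin n × Fin q, S.Jmat U τ p p' * φ p') = t * φ p) →
    t ≤ η

/-- `b`-marginal boundedness: every positive conditional marginal is at least `b`. -/
def MarginallyBounded (S : SpinSystem n q) (b : ℝ) : Prop :=
  ∀ U τ, S.IsPinning U τ → ∀ x, x ∉ U → ∀ a : Fin q,
    0 < S.margin U τ x a → b ≤ S.margin U τ x a

/-- Total connectivity: for every pinning, any two configurations in the support of the
pinned measure are connected by single-site moves within the support. -/
def TotallyConnected (S : SpinSystem n q) : Prop :=
  ∀ U τ, S.IsPinning U τ → ∀ σ σ' : Cfg n q,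
    0 < S.condWt U τ σ → 0 < S.condWt U τ σ' →
    Relation.ReflTransGen
      (fun a b => 0 < S.condWt U τ a ∧ 0 < S.condWt U τ b ∧ hamming a b = 1) σ σ'

/-- Conditional expectation `μ^U f` of `f` given the spins on `U`. -/
def condExp (S : SpinSystem n q) (U : Finset (Fin n)) (f : Cfg n q → ℝ) : Cfg n q → ℝ :=
  fun σ => expec (S.condMu U σ) f

/-- Expected conditional entropy `μ[Ent_B f]`. -/
def muEnt (S : SpinSystem n q) (B : Finset (Fin n)) (f : Cfg n q → ℝ) : ℝ :=
  ∑ σ : Cfg n q, S.gibbs σ * entOf (S.condMu Bᶜ σ) f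

/-- The `α`-weighted heat-bath block dynamics. -/
def blockDyn (S : SpinSystem n q) (α : Finset (Fin n) → ℝ) (σ σ' : Cfg n q) : ℝ :=
  ∑ B : Finset (Fin n), α B * S.condMu Bᶜ σ σ'

/-- The Glauber dynamics for the measure pinned on `U` (a uniformly random vertex is chosen;
pinned vertices leave the configuration unchanged, unpinned vertices are resampled from the
conditional distribution given all the other spins). -/
def glauberPin (S : SpinSystem n q) (U : Finset (Fin n)) (σ σ' : Cfg n q) : ℝ :=
  (n : ℝ)⁻¹ * ∑ x : Fin n,
    if x ∈ U then (if σ' = σ then 1 else 0)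
    else S.condMu (({x} : Finset (Fin n))ᶜ) σ σ'

/-- The (unpinned) Glauber dynamics. -/
def glauber (S : SpinSystem n q) : Cfg n q → Cfg n q → ℝ := S.glauberPin ∅

/-- The Dobrushin dependency matrix. -/
def dobrushin (S : SpinSystem n q) (x y : Fin n) : ℝ :=
  if x = y then 0 else
    sSup {r | ∃ σ τ : Cfg n q,
      S.IsPinning (Finset.univ.erase y) σ ∧ S.IsPinning (Finset.univ.erase y) τ ∧
      (∀ z : Fin n, z ≠ x → z ≠ y → σ z = τ z) ∧
      r = tvDist (fun a : Fin q => S.margin (Finset.univ.erase y) σ y a)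
                 (fun a : Fin q => S.margin (Finset.univ.erase y) τ y a)}

end SpinSystem

/-- `δ(α) = min_x ∑_{B ∋ x} α_B`. -/
def deltaOf (n : ℕ) (α : Finset (Fin n) → ℝ) : ℝ :=
  ⨅ x : Fin n, ∑ B ∈ Finset.univ.filter (fun B : Finset (Fin n) => x ∈ B), α B

/-- General block factorization of entropy with constant `C`. -/
def GBF {n q : ℕ} (S : SpinSystem n q) (C : ℝ) : Prop :=
  ∀ α : Finset (Fin n) → ℝ, (∀ B, 0 ≤ α B) → (∑ B : Finset (Fin n), α B = 1) →
    ∀ f : Cfg n q → ℝ, (∀ σ, 0 ≤ f σ) →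
      deltaOf n α * entOf S.gibbs f ≤ C * ∑ B : Finset (Fin n), α B * S.muEnt B f

/-- `ℓ`-uniform block factorization of entropy with constant `C`. -/
def UBF {n q : ℕ} (S : SpinSystem n q) (ℓ : ℕ) (C : ℝ) : Prop :=
  ∀ f : Cfg n q → ℝ, (∀ σ, 0 ≤ f σ) →
    ((ℓ : ℝ) / n) * entOf S.gibbs f ≤
      C * ((Nat.choose n ℓ : ℝ)⁻¹ *
        ∑ Λ ∈ Finset.powersetCard ℓ (Finset.univ : Finset (Fin n)), S.muEnt Λ f)

/-- `P` is a partition of the vertex set into independent sets of `G`. -/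
def IsIndepPartition {n k : ℕ} (G : SimpleGraph (Fin n)) (P : Fin k → Finset (Fin n)) : Prop :=
  (∀ x : Fin n, ∃! i, x ∈ P i) ∧ ∀ i, ∀ x ∈ P i, ∀ y ∈ P i, ¬ G.Adj x y

/-- `k`-partite factorization of entropy with constant `C` relative to the partition `P`. -/
def KPF {n q k : ℕ} (S : SpinSystem n q) (P : Fin k → Finset (Fin n)) (C : ℝ) : Prop :=
  ∀ f : Cfg n q → ℝ, (∀ σ, 0 ≤ f σ) →
    entOf S.gibbs f ≤ C * ∑ i : Fin k, S.muEnt (P i) f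

/-! ### Metrics on configurations and contraction -/

/-- Hamming metric, real-valued. -/
def dHam {n q : ℕ} (σ τ : Cfg n q) : ℝ := (hamming σ τ : ℝ)

/-- `w`-weighted Hamming metric. -/
def dW {n q : ℕ} (w : Fin n → ℝ) (σ τ : Cfg n q) : ℝ :=
  ∑ x : Fin n, if σ x ≠ τ x then w x else 0

/-- `d` is `γ`-equivalent to the Hamming metric. -/
def GammaEquiv {n q : ℕ} (γ : ℝ) (d : Cfg n q → Cfg n q → ℝ) : Prop :=
  ∀ σ τ : Cfg n q, (1 / γ) * dHam σ τ ≤ d σ τ ∧ d σ τ ≤ γ * dHam σ τ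

/-- `μ` is `κ`-contractive with respect to the family of chains `P` (one for each pinning)
and the metric `d`: from any two states in the support of the pinned measure there is a
one-step coupling contracting `d` by a factor `κ` in expectation. -/
def ContractiveFam {n q : ℕ} (S : SpinSystem n q)
    (P : Finset (Fin n) → Cfg n q → Cfg n q → Cfg n q → ℝ)
    (d : Cfg n q → Cfg n q → ℝ) (κ : ℝ) : Prop :=
  ∀ U τ, S.IsPinning U τ → ∀ X₀ Y₀ : Cfg n q,
    0 < S.condWt U τ X₀ → 0 < S.condWt U τ Y₀ →
    ∃ π : Cfg n q × Cfg n q → ℝ,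
      IsCoupling π (P U τ X₀) (P U τ Y₀) ∧
      (∑ p : Cfg n q × Cfg n q, π p * d p.1 p.2) ≤ κ * d X₀ Y₀

/-- The family of chains `P` is `Φ`-local: extending a pinning by a single feasible
vertex-spin pair changes one step of the chain by at most `Φ` in Wasserstein distance
with respect to the Hamming metric. -/
def PhiLocal {n q : ℕ} (S : SpinSystem n q)
    (P : Finset (Fin n) → Cfg n q → Cfg n q → Cfg n q → ℝ) (Φ : ℝ) : Prop :=
  ∀ U τ, S.IsPinning U τ → ∀ x, x ∉ U → ∀ a : Fin q,
    0 < S.margin U τ x a →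
    ∀ σ : Cfg n q, 0 < S.condWt (insert x U) (Function.update τ x a) σ →
      W1 dHam (P U τ σ) (P (insert x U) (Function.update τ x a) σ) ≤ Φ

/-- A select-update dynamics for the spin system `S`: a block is selected from a
distribution that may depend on the current configuration (but not on the pinning),
and the configuration on the block is resampled from a distribution that may depend on
the current configuration and on the restriction of the pinning to the block; for each
pinning the resulting chain has the pinned Gibbs measure as stationary distribution. -/
structure SelectUpdate {n q : ℕ} (S : SpinSystem n q) where
  blocks : Finset (Finset (Fin n))
  sel : Cfg n q → Finset (Fin n) → ℝ
  sel_nonneg : ∀ σ B, 0 ≤ sel σ B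
  sel_sum : ∀ σ, ∑ B ∈ blocks, sel σ B = 1
  upd : Finset (Fin n) → Cfg n q → Cfg n q → Finset (Fin n) → Cfg n q → ℝ
  upd_nonneg : ∀ U τ σ B σ', 0 ≤ upd U τ σ B σ'
  upd_sum : ∀ U τ σ B, ∑ σ' : Cfg n q, upd U τ σ B σ' = 1
  upd_off : ∀ U τ σ B σ', upd U τ σ B σ' ≠ 0 → ∀ x ∉ B, σ' x = σ x
  upd_local : ∀ U U' τ τ' σ B, U ∩ B = U' ∩ B → (∀ x ∈ U ∩ B, τ x = τ' x) →
    upd U τ σ B = upd U' τ' σ B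
  stat : ∀ U τ, S.IsPinning U τ →
    IsStationaryDist (fun σ σ' => ∑ B ∈ blocks, sel σ B * upd U τ σ B σ') (S.condMu U τ)

/-- The transition matrix of the select-update dynamics under the pinning `τ` on `U`. -/
def SelectUpdate.chain {n q : ℕ} {S : SpinSystem n q} (SU : SelectUpdate S)
    (U : Finset (Fin n)) (τ : Cfg n q) (σ σ' : Cfg n q) : ℝ :=
  ∑ B ∈ SU.blocks, SU.sel σ B * SU.upd U τ σ B σ'

/-- Spectral radius of a real square matrix (largest modulus of a complex eigenvalue). -/
def specRad {n : ℕ} (M : Matrix (Fin n) (Fin n) ℝ) : ℝ :=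
  sSup {r : ℝ | ∃ z : ℂ, z ∈ spectrum ℂ (M.map ((↑) : ℝ → ℂ)) ∧ r = ‖z‖}

/-! ### Models: Potts/Ising, colorings, Swendsen-Wang, Edwards-Sokal -/

/-- The `q`-state ferromagnetic Potts model at inverse temperature `β`. -/
def pottsSystem (n q : ℕ) (β : ℝ) (G : SimpleGraph (Fin n)) : SpinSystem n q where
  G := G
  A := fun _ _ a b => Real.exp (if a = b then β else 0)
  B := fun _ _ => 1
  A_nonneg := fun _ _ _ _ => (Real.exp_pos _).le
  A_symm := by
    intro x y a b
    by_cases h : a = b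
    · subst h; rfl
    · have h' : ¬ b = a := fun hba => h hba.symm
      simp [h, h']
  B_nonneg := fun _ _ => zero_le_one

/-- The ferromagnetic Ising model at inverse temperature `β`. -/
def isingSystem (n : ℕ) (β : ℝ) (G : SimpleGraph (Fin n)) : SpinSystem n 2 :=
  pottsSystem n 2 β G

/-- The proper `q`-colorings model (so its Gibbs distribution is the uniform distribution
over proper `q`-colorings). -/
def coloringSystem (n q : ℕ) (G : SimpleGraph (Fin n)) : SpinSystem n q where
  G := G
  A := fun _ _ a b => if a = b then 0 else 1
  B := fun _ _ => 1
  A_nonneg := by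
    intro x y a b; split <;> norm_num
  A_symm := by
    intro x y a b
    by_cases h : a = b
    · subst h; rfl
    · have h' : ¬ b = a := fun hba => h hba.symm
      simp [h, h']
  B_nonneg := fun _ _ => zero_le_one

/-- The set of edges of `G` that are monochromatic in `σ`. -/
def monoEdges {n q : ℕ} (G : SimpleGraph (Fin n)) (σ : Cfg n q) : Finset (Sym2 (Fin n)) :=
  Finset.univ.filter fun e => e ∈ G.edgeSet ∧ ∀ x ∈ e, ∀ y ∈ e, σ x = σ y

/-- The edge set of `G` as a finset. -/
def edgesOf {n : ℕ} (G : SimpleGraph (Fin n)) : Finset (Sym2 (Fin n)) :=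
  Finset.univ.filter fun e => e ∈ G.edgeSet

/-- The Swendsen-Wang dynamics: each monochromatic edge is retained independently with
probability `p`, and then every connected component of the retained graph receives an
independent uniformly random spin. -/
def swStep {n : ℕ} (G : SimpleGraph (Fin n)) (q : ℕ) (p : ℝ) (σ σ' : Cfg n q) : ℝ :=
  ∑ A ∈ (monoEdges G σ).powerset,
    p ^ A.card * (1 - p) ^ ((monoEdges G σ).card - A.card) *
      (if ∀ x y : Fin n,
            (SimpleGraph.fromEdgeSet (A : Set (Sym2 (Fin n)))).Reachable x y → σ' x = σ' y
       then ((q : ℝ))⁻¹ ^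
          (Nat.card (SimpleGraph.fromEdgeSet (A : Set (Sym2 (Fin n)))).ConnectedComponent)
       else 0)

/-- Edwards-Sokal weight of a joint spin-edge configuration, with `p = 1 - e^{-β}`. -/
def esWt {n : ℕ} (G : SimpleGraph (Fin n)) (q : ℕ) (β : ℝ)
    (p0 : Cfg n q × Finset (Sym2 (Fin n))) : ℝ :=
  if p0.2 ⊆ monoEdges G p0.1 then
    (1 - Real.exp (-β)) ^ p0.2.card * (Real.exp (-β)) ^ ((edgesOf G).card - p0.2.card)
  else 0

/-- Edwards-Sokal (joint) measure. -/
def esMu {n : ℕ} (G : SimpleGraph (Fin n)) (q : ℕ) (β : ℝ)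
    (p0 : Cfg n q × Finset (Sym2 (Fin n))) : ℝ :=
  esWt G q β p0 / ∑ p1 : Cfg n q × Finset (Sym2 (Fin n)), esWt G q β p1

/-- Edwards-Sokal measure conditioned on the spin configuration being `σ0`. -/
def esCondSpin {n : ℕ} (G : SimpleGraph (Fin n)) (q : ℕ) (β : ℝ) (σ0 : Cfg n q)
    (p0 : Cfg n q × Finset (Sym2 (Fin n))) : ℝ :=
  if p0.1 = σ0 then
    esWt G q β p0 / ∑ A : Finset (Sym2 (Fin n)), esWt G q β (σ0, A)
  else 0

/-- Edwards-Sokal measure conditioned on the edge configuration being `A0`. -/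
def esCondEdge {n : ℕ} (G : SimpleGraph (Fin n)) (q : ℕ) (β : ℝ) (A0 : Finset (Sym2 (Fin n)))
    (p0 : Cfg n q × Finset (Sym2 (Fin n))) : ℝ :=
  if p0.2 = A0 then
    esWt G q β p0 / ∑ σ : Cfg n q, esWt G q β (σ, A0)
  else 0

/-- `ν[Ent_ν(f | σ)]`: the expected conditional entropy of `f` given the spins. -/
def esSpinEnt {n : ℕ} (G : SimpleGraph (Fin n)) (q : ℕ) (β : ℝ)
    (f : Cfg n q × Finset (Sym2 (Fin n)) → ℝ) : ℝ :=
  ∑ p0 : Cfg n q × Finset (Sym2 (Fin n)), esMu G q β p0 * entOf (esCondSpin G q β p0.1) f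

/-- `ν[Ent_ν(f | A)]`: the expected conditional entropy of `f` given the edges. -/
def esEdgeEnt {n : ℕ} (G : SimpleGraph (Fin n)) (q : ℕ) (β : ℝ)
    (f : Cfg n q × Finset (Sym2 (Fin n)) → ℝ) : ℝ :=
  ∑ p0 : Cfg n q × Finset (Sym2 (Fin n)), esMu G q β p0 * entOf (esCondEdge G q β p0.2) f

/-! ### Auxiliary lemmas for the proof of STATEMENT 5 -/

section SIAuxGeneric
variable {Ω : Type*} [Fintype Ω]

lemma cost_nonneg' {d : Ω → Ω → ℝ} (hd : ∀ a b, 0 ≤ d a b) {π : Ω × Ω → ℝ}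
    (hπ : ∀ p, 0 ≤ π p) : 0 ≤ ∑ p, π p * d p.1 p.2 :=
  Finset.sum_nonneg fun p _ => mul_nonneg (hπ p) (hd _ _)

lemma W1_le_cost {d : Ω → Ω → ℝ} (hd : ∀ a b, 0 ≤ d a b)
    {μ ν : Ω → ℝ} {π : Ω × Ω → ℝ} (h : IsCoupling π μ ν) :
    W1 d μ ν ≤ ∑ p, π p * d p.1 p.2 :=
  csInf_le ⟨0, by rintro r ⟨π', h', rfl⟩; exact cost_nonneg' hd h'.1⟩ ⟨π, h, rfl⟩

lemma prod_isCoupling {μ ν : Ω → ℝ} (hμ : IsProb μ) (hν : IsProb ν) :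
    IsCoupling (fun p : Ω × Ω => μ p.1 * ν p.2) μ ν := by
  refine ⟨fun p => mul_nonneg (hμ.1 _) (hν.1 _), fun s => ?_, fun s' => ?_⟩
  · simp [← Finset.mul_sum, hν.2]
  · simp [← Finset.sum_mul, hμ.2]

lemma exists_coupling_W1_add {d : Ω → Ω → ℝ} {μ ν : Ω → ℝ}
    (hμ : IsProb μ) (hν : IsProb ν) {ε : ℝ} (hε : 0 < ε) :
    ∃ π : Ω × Ω → ℝ, IsCoupling π μ ν ∧ ∑ p, π p * d p.1 p.2 ≤ W1 d μ ν + ε := by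
  have hne : {r | ∃ π : Ω × Ω → ℝ, IsCoupling π μ ν ∧ r = ∑ p, π p * d p.1 p.2}.Nonempty :=
    ⟨_, ⟨_, prod_isCoupling hμ hν, rfl⟩⟩
  obtain ⟨r, ⟨π, hπ, rfl⟩, hr⟩ := exists_lt_of_csInf_lt hne
    (lt_add_of_pos_right (W1 d μ ν) hε)
  exact ⟨π, hπ, hr.le⟩

lemma glue_coupling {d : Ω → Ω → ℝ} (hdt : ∀ a b c, d a c ≤ d a b + d b c)
    {μ ν lam : Ω → ℝ} {π₁ π₂ : Ω × Ω → ℝ}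
    (h₁ : IsCoupling π₁ μ ν) (h₂ : IsCoupling π₂ ν lam) :
    ∃ χ : Ω × Ω → ℝ, IsCoupling χ μ lam ∧
      ∑ p, χ p * d p.1 p.2 ≤ ∑ p, π₁ p * d p.1 p.2 + ∑ p, π₂ p * d p.1 p.2 := by
  have hν0 : ∀ b, 0 ≤ ν b := fun b => (h₁.2.2 b) ▸ Finset.sum_nonneg fun s _ => h₁.1 (s, b)
  have hz1 : ∀ a b, ν b = 0 → π₁ (a, b) = 0 := by
    intro a b hb
    have := (Finset.sum_eq_zero_iff_of_nonneg (fun s (_ : s ∈ Finset.univ) => h₁.1 (s, b))).1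
      (by rw [h₁.2.2 b, hb])
    exact this a (Finset.mem_univ a)
  have hz2 : ∀ b c, ν b = 0 → π₂ (b, c) = 0 := by
    intro b c hb
    have := (Finset.sum_eq_zero_iff_of_nonneg (fun s' (_ : s' ∈ Finset.univ) => h₂.1 (b, s'))).1
      (by rw [h₂.2.1 b, hb])
    exact this c (Finset.mem_univ c)
  have hnn : ∀ a b c, 0 ≤ π₁ (a, b) / ν b * π₂ (b, c) :=
    fun a b c => mul_nonneg (div_nonneg (h₁.1 _) (hν0 b)) (h₂.1 _)
  refine ⟨fun p => ∑ b, π₁ (p.1, b) / ν b * π₂ (b, p.2), ⟨?_, ?_, ?_⟩, ?_⟩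
  · intro p
    exact Finset.sum_nonneg fun b _ => hnn _ _ _
  · intro s
    have key : ∀ b : Ω, ∑ s', π₁ (s, b) / ν b * π₂ (b, s') = π₁ (s, b) := by
      intro b
      rw [← Finset.mul_sum, h₂.2.1 b]
      by_cases hb : ν b = 0
      · simp [hb, hz1 s b hb]
      · field_simp
    calc ∑ s', ∑ b, π₁ (s, b) / ν b * π₂ (b, s')
        = ∑ b, ∑ s', π₁ (s, b) / ν b * π₂ (b, s') := Finset.sum_comm
      _ = ∑ b, π₁ (s, b) := Finset.sum_congr rfl fun b _ => key b
      _ = μ s := h₁.2.1 s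
  · intro s'
    have key : ∀ b : Ω, ∑ s, π₁ (s, b) / ν b * π₂ (b, s') = π₂ (b, s') := by
      intro b
      have e : ∑ s, π₁ (s, b) / ν b * π₂ (b, s') = (∑ s, π₁ (s, b)) / ν b * π₂ (b, s') := by
        rw [Finset.sum_div, Finset.sum_mul]
      rw [e, h₁.2.2 b]
      by_cases hb : ν b = 0
      · simp [hb, hz2 b s' hb]
      · field_simp
    calc ∑ s, ∑ b, π₁ (s, b) / ν b * π₂ (b, s')
        = ∑ b, ∑ s, π₁ (s, b) / ν b * π₂ (b, s') := Finset.sum_comm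
      _ = ∑ b, π₂ (b, s') := Finset.sum_congr rfl fun b _ => key b
      _ = lam s' := h₂.2.2 s'
  · have hA : (∑ p : Ω × Ω, ∑ b, π₁ (p.1, b) / ν b * π₂ (b, p.2) * d p.1 b)
        = ∑ p : Ω × Ω, π₁ p * d p.1 p.2 := by
      calc ∑ p : Ω × Ω, ∑ b, π₁ (p.1, b) / ν b * π₂ (b, p.2) * d p.1 b
          = ∑ b, ∑ p : Ω × Ω, π₁ (p.1, b) / ν b * π₂ (b, p.2) * d p.1 b := Finset.sum_comm
        _ = ∑ b, ∑ a, ∑ c, π₁ (a, b) / ν b * π₂ (b, c) * d a b := by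
            refine Finset.sum_congr rfl fun b _ => ?_
            rw [Fintype.sum_prod_type]
        _ = ∑ b, ∑ a, π₁ (a, b) * d a b := by
            refine Finset.sum_congr rfl fun b _ => Finset.sum_congr rfl fun a _ => ?_
            have e : ∑ c, π₁ (a, b) / ν b * π₂ (b, c) * d a b
                = π₁ (a, b) / ν b * d a b * ∑ c, π₂ (b, c) := by
              rw [Finset.mul_sum]; exact Finset.sum_congr rfl fun c _ => by ring
            rw [e, h₂.2.1 b]
            by_cases hb : ν b = 0
            · simp [hb, hz1 a b hb]
            · field_simp
        _ = ∑ a, ∑ b, π₁ (a, b) * d a b := Finset.sum_comm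
        _ = ∑ p : Ω × Ω, π₁ p * d p.1 p.2 := by rw [Fintype.sum_prod_type]
    have hB : (∑ p : Ω × Ω, ∑ b, π₁ (p.1, b) / ν b * π₂ (b, p.2) * d b p.2)
        = ∑ p : Ω × Ω, π₂ p * d p.1 p.2 := by
      calc ∑ p : Ω × Ω, ∑ b, π₁ (p.1, b) / ν b * π₂ (b, p.2) * d b p.2
          = ∑ b, ∑ p : Ω × Ω, π₁ (p.1, b) / ν b * π₂ (b, p.2) * d b p.2 := Finset.sum_comm
        _ = ∑ b, ∑ a, ∑ c, π₁ (a, b) / ν b * π₂ (b, c) * d b c := by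
            refine Finset.sum_congr rfl fun b _ => ?_
            rw [Fintype.sum_prod_type]
        _ = ∑ b, ∑ c, π₂ (b, c) * d b c := by
            refine Finset.sum_congr rfl fun b _ => ?_
            rw [Finset.sum_comm]
            refine Finset.sum_congr rfl fun c _ => ?_
            have e : ∑ a, π₁ (a, b) / ν b * π₂ (b, c) * d b c
                = (∑ a, π₁ (a, b)) / ν b * (π₂ (b, c) * d b c) := by
              rw [Finset.sum_div, Finset.sum_mul]
              exact Finset.sum_congr rfl fun a _ => by ring
            rw [e, h₁.2.2 b]
            by_cases hb : ν b = 0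
            · simp [hb, hz2 b c hb]
            · field_simp
        _ = ∑ p : Ω × Ω, π₂ p * d p.1 p.2 := by rw [Fintype.sum_prod_type]
    calc ∑ p : Ω × Ω, (∑ b, π₁ (p.1, b) / ν b * π₂ (b, p.2)) * d p.1 p.2
        = ∑ p : Ω × Ω, ∑ b, π₁ (p.1, b) / ν b * π₂ (b, p.2) * d p.1 p.2 := by
          exact Finset.sum_congr rfl fun p _ => Finset.sum_mul _ _ _
      _ ≤ ∑ p : Ω × Ω, ∑ b, (π₁ (p.1, b) / ν b * π₂ (b, p.2) * d p.1 b
            + π₁ (p.1, b) / ν b * π₂ (b, p.2) * d b p.2) := by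
          refine Finset.sum_le_sum fun p _ => Finset.sum_le_sum fun b _ => ?_
          rw [← mul_add]
          exact mul_le_mul_of_nonneg_left (hdt p.1 b p.2) (hnn _ _ _)
      _ = (∑ p : Ω × Ω, ∑ b, π₁ (p.1, b) / ν b * π₂ (b, p.2) * d p.1 b)
            + ∑ p : Ω × Ω, ∑ b, π₁ (p.1, b) / ν b * π₂ (b, p.2) * d b p.2 := by
          simp [Finset.sum_add_distrib]
      _ = ∑ p : Ω × Ω, π₁ p * d p.1 p.2 + ∑ p : Ω × Ω, π₂ p * d p.1 p.2 := by rw [hA, hB]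

lemma mixture_coupling {I : Type*} [Fintype I] {d : Ω → Ω → ℝ}
    {w : I → ℝ} (hw : ∀ i, 0 ≤ w i) {f g : I → Ω → ℝ} {c : I → ℝ}
    (h : ∀ i, w i ≠ 0 → ∃ ρ : Ω × Ω → ℝ, IsCoupling ρ (f i) (g i) ∧
      ∑ p, ρ p * d p.1 p.2 ≤ c i) :
    ∃ Pi : Ω × Ω → ℝ,
      IsCoupling Pi (fun a => ∑ i, w i * f i a) (fun b => ∑ i, w i * g i b) ∧
      ∑ p, Pi p * d p.1 p.2 ≤ ∑ i, w i * c i := by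
  classical
  have hρ : ∀ i, ∃ ρ : Ω × Ω → ℝ, w i ≠ 0 →
      IsCoupling ρ (f i) (g i) ∧ ∑ p, ρ p * d p.1 p.2 ≤ c i := by
    intro i
    by_cases hi : w i ≠ 0
    · obtain ⟨ρ, h1, h2⟩ := h i hi; exact ⟨ρ, fun _ => ⟨h1, h2⟩⟩
    · exact ⟨fun _ => 0, fun hi' => absurd hi' hi⟩
  choose ρ hρspec using hρ
  refine ⟨fun p => ∑ i, w i * ρ i p, ⟨?_, ?_, ?_⟩, ?_⟩
  · intro p
    refine Finset.sum_nonneg fun i _ => ?_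
    by_cases hi : w i = 0
    · simp [hi]
    · exact mul_nonneg (hw i) ((hρspec i hi).1.1 p)
  · intro s
    rw [Finset.sum_comm]
    refine Finset.sum_congr rfl fun i _ => ?_
    by_cases hi : w i = 0
    · simp [hi]
    · rw [← Finset.mul_sum, (hρspec i hi).1.2.1 s]
  · intro s'
    rw [Finset.sum_comm]
    refine Finset.sum_congr rfl fun i _ => ?_
    by_cases hi : w i = 0
    · simp [hi]
    · rw [← Finset.mul_sum, (hρspec i hi).1.2.2 s']
  · calc ∑ p : Ω × Ω, (∑ i, w i * ρ i p) * d p.1 p.2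
        = ∑ p : Ω × Ω, ∑ i, w i * ρ i p * d p.1 p.2 := by
          exact Finset.sum_congr rfl fun p _ => Finset.sum_mul _ _ _
      _ = ∑ i, ∑ p : Ω × Ω, w i * ρ i p * d p.1 p.2 := Finset.sum_comm
      _ ≤ ∑ i, w i * c i := by
          refine Finset.sum_le_sum fun i _ => ?_
          by_cases hi : w i = 0
          · simp [hi]
          · calc ∑ p : Ω × Ω, w i * ρ i p * d p.1 p.2
                = w i * ∑ p : Ω × Ω, ρ i p * d p.1 p.2 := by
                  rw [Finset.mul_sum]; exact Finset.sum_congr rfl fun p _ => by ring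
              _ ≤ w i * c i := mul_le_mul_of_nonneg_left ((hρspec i hi).2) (hw i)

lemma diag_coupling {d : Ω → Ω → ℝ} (hrefl : ∀ a, d a a = 0) {f : Ω → ℝ}
    (hf : ∀ s, 0 ≤ f s) :
    ∃ ρ : Ω × Ω → ℝ, IsCoupling ρ f f ∧ ∑ p, ρ p * d p.1 p.2 ≤ 0 := by
  refine ⟨fun p => if p.1 = p.2 then f p.1 else 0, ⟨?_, ?_, ?_⟩, ?_⟩
  · intro p; dsimp only; split
    · exact hf _
    · exact le_refl 0
  · intro s; simp
  · intro s'; simp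
  · have e : ∀ p : Ω × Ω, (if p.1 = p.2 then f p.1 else 0) * d p.1 p.2 = 0 := by
      intro p; by_cases hp : p.1 = p.2
      · simp [hp, hrefl]
      · simp [hp]
    simp [e]

lemma IsCoupling_congr {π : Ω × Ω → ℝ} {μ μ' ν ν' : Ω → ℝ}
    (h1 : μ = μ') (h2 : ν = ν') (h : IsCoupling π μ ν) : IsCoupling π μ' ν' := h1 ▸ h2 ▸ h

end SIAuxGeneric

section SIAuxSpin
variable {n q : ℕ}

lemma wt_nonneg' (S : SpinSystem n q) (σ : Cfg n q) : 0 ≤ S.wt σ := by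
  unfold SpinSystem.wt
  refine mul_nonneg (Finset.prod_nonneg fun x _ => Finset.prod_nonneg fun y _ => ?_)
    (Finset.prod_nonneg fun x _ => S.B_nonneg _ _)
  split
  · exact S.A_nonneg _ _ _ _
  · exact zero_le_one

lemma condWt_nonneg' (S : SpinSystem n q) (U : Finset (Fin n)) (τ σ : Cfg n q) :
    0 ≤ S.condWt U τ σ := by
  unfold SpinSystem.condWt; split
  · exact wt_nonneg' S σ
  · exact le_refl 0

lemma condZ_nonneg' (S : SpinSystem n q) (U : Finset (Fin n)) (τ : Cfg n q) :
    0 ≤ S.condZ U τ :=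
  Finset.sum_nonneg fun σ _ => condWt_nonneg' S U τ σ

lemma condWt_pos_iff' (S : SpinSystem n q) (U : Finset (Fin n)) (τ σ : Cfg n q) :
    0 < S.condWt U τ σ ↔ (∀ y ∈ U, σ y = τ y) ∧ 0 < S.wt σ := by
  unfold SpinSystem.condWt
  by_cases h : ∀ y ∈ U, σ y = τ y
  · rw [if_pos h]; exact ⟨fun hw => ⟨h, hw⟩, And.right⟩
  · rw [if_neg h]; simp [h]

lemma condZ_pos' (S : SpinSystem n q) {U : Finset (Fin n)} {τ : Cfg n q}
    (h : S.IsPinning U τ) : 0 < S.condZ U τ := by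
  obtain ⟨σ, hw, hτ⟩ := h
  have h1 : 0 < S.condWt U τ σ := (condWt_pos_iff' S U τ σ).2 ⟨hτ, hw⟩
  exact lt_of_lt_of_le h1 (Finset.single_le_sum (fun s _ => condWt_nonneg' S U τ s)
    (Finset.mem_univ σ))

lemma condMu_nonneg' (S : SpinSystem n q) (U : Finset (Fin n)) (τ σ : Cfg n q) :
    0 ≤ S.condMu U τ σ :=
  div_nonneg (condWt_nonneg' S U τ σ) (condZ_nonneg' S U τ)

lemma condMu_sum_one' (S : SpinSystem n q) {U : Finset (Fin n)} {τ : Cfg n q}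
    (hZ : 0 < S.condZ U τ) : ∑ σ : Cfg n q, S.condMu U τ σ = 1 := by
  unfold SpinSystem.condMu
  rw [← Finset.sum_div]
  exact div_self hZ.ne'

lemma condMu_isProb' (S : SpinSystem n q) {U : Finset (Fin n)} {τ : Cfg n q}
    (h : S.IsPinning U τ) : IsProb (S.condMu U τ) :=
  ⟨condMu_nonneg' S U τ, condMu_sum_one' S (condZ_pos' S h)⟩

lemma condWt_pos_of_condMu_pos' (S : SpinSystem n q) {U : Finset (Fin n)} {τ σ : Cfg n q}
    (h : 0 < S.condMu U τ σ) : 0 < S.condWt U τ σ := by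
  rcases (condWt_nonneg' S U τ σ).lt_or_eq with h' | h'
  · exact h'
  · exfalso
    rw [SpinSystem.condMu, ← h', zero_div] at h
    exact lt_irrefl 0 h

lemma margin_pos_elim' (S : SpinSystem n q) {U : Finset (Fin n)} {τ : Cfg n q} {x : Fin n}
    {a : Fin q} (h : 0 < S.margin U τ x a) :
    ∃ σ : Cfg n q, σ x = a ∧ 0 < S.condMu U τ σ := by
  by_contra hc
  push_neg at hc
  have h0 : S.margin U τ x a = 0 := by
    unfold SpinSystem.margin
    refine Finset.sum_eq_zero fun σ _ => ?_
    by_cases hσ : σ x = a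
    · rw [if_pos hσ]
      exact le_antisymm (hc σ hσ) (condMu_nonneg' S U τ σ)
    · rw [if_neg hσ]
  rw [h0] at h; exact lt_irrefl 0 h

lemma condWt_insert_pos' (S : SpinSystem n q) {U : Finset (Fin n)} {τ : Cfg n q} {x : Fin n}
    (hx : x ∉ U) {a : Fin q} {σ : Cfg n q}
    (h : 0 < S.condWt (insert x U) (Function.update τ x a) σ) : 0 < S.condWt U τ σ := by
  rw [condWt_pos_iff'] at h ⊢
  refine ⟨fun y hy => ?_, h.2⟩
  have hne : y ≠ x := fun hyx => hx (hyx ▸ hy)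
  have := h.1 y (Finset.mem_insert_of_mem hy)
  rwa [Function.update_of_ne hne] at this

lemma insert_pinning' (S : SpinSystem n q) {U : Finset (Fin n)} {τ : Cfg n q} {x : Fin n}
    {a : Fin q} (hx : x ∉ U) (ha : 0 < S.margin U τ x a) :
    S.IsPinning (insert x U) (Function.update τ x a) := by
  obtain ⟨σ, hσx, hμ⟩ := margin_pos_elim' S ha
  have hw := (condWt_pos_iff' S U τ σ).1 (condWt_pos_of_condMu_pos' S hμ)
  refine ⟨σ, hw.2, fun y hy => ?_⟩
  rcases Finset.mem_insert.1 hy with rfl | hyU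
  · rw [Function.update_self]; exact hσx
  · rw [Function.update_of_ne (ne_of_mem_of_not_mem hyU hx)]; exact hw.1 y hyU

lemma mem_compl_singleton' {x y : Fin n} : y ∈ ({x} : Finset (Fin n))ᶜ ↔ y ≠ x := by
  simp

lemma detailed_balance' (S : SpinSystem n q) {U : Finset (Fin n)} {τ : Cfg n q}
    {x : Fin n} (hx : x ∉ U) (σ σ' : Cfg n q) :
    S.condMu U τ σ * S.condMu (({x} : Finset (Fin n))ᶜ) σ σ'
      = S.condMu U τ σ' * S.condMu (({x} : Finset (Fin n))ᶜ) σ' σ := by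
  by_cases hagree : ∀ y, y ≠ x → σ y = σ' y
  · have hZx : S.condZ (({x} : Finset (Fin n))ᶜ) σ = S.condZ (({x} : Finset (Fin n))ᶜ) σ' := by
      unfold SpinSystem.condZ SpinSystem.condWt
      refine Finset.sum_congr rfl fun η _ => ?_
      have hiff : (∀ y ∈ ({x} : Finset (Fin n))ᶜ, η y = σ y) ↔
          (∀ y ∈ ({x} : Finset (Fin n))ᶜ, η y = σ' y) := by
        constructor <;> intro h y hy
        · rw [← hagree y (mem_compl_singleton'.1 hy)]; exact h y hy
        · rw [hagree y (mem_compl_singleton'.1 hy)]; exact h y hy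
      rw [if_congr hiff rfl rfl]
    have hW1 : S.condWt (({x} : Finset (Fin n))ᶜ) σ σ' = S.wt σ' := by
      unfold SpinSystem.condWt
      rw [if_pos fun y hy => (hagree y (mem_compl_singleton'.1 hy)).symm]
    have hW2 : S.condWt (({x} : Finset (Fin n))ᶜ) σ' σ = S.wt σ := by
      unfold SpinSystem.condWt
      rw [if_pos fun y hy => hagree y (mem_compl_singleton'.1 hy)]
    have hUiff : (∀ y ∈ U, σ y = τ y) ↔ ∀ y ∈ U, σ' y = τ y := by
      constructor <;> intro h y hy
      · rw [← hagree y (ne_of_mem_of_not_mem hy hx)]; exact h y hy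
      · rw [hagree y (ne_of_mem_of_not_mem hy hx)]; exact h y hy
    unfold SpinSystem.condMu
    rw [hW1, hW2, hZx]
    unfold SpinSystem.condWt
    by_cases hU : ∀ y ∈ U, σ y = τ y
    · rw [if_pos hU, if_pos (hUiff.1 hU)]; ring
    · rw [if_neg hU, if_neg (fun h => hU (hUiff.2 h))]; simp
  · push_neg at hagree
    obtain ⟨y, hyx, hy⟩ := hagree
    have h1 : S.condWt (({x} : Finset (Fin n))ᶜ) σ σ' = 0 := by
      unfold SpinSystem.condWt
      rw [if_neg]
      intro hall
      exact hy ((hall y (mem_compl_singleton'.2 hyx)).symm)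
    have h2 : S.condWt (({x} : Finset (Fin n))ᶜ) σ' σ = 0 := by
      unfold SpinSystem.condWt
      rw [if_neg]
      intro hall
      exact hy (hall y (mem_compl_singleton'.2 hyx))
    unfold SpinSystem.condMu
    rw [h1, h2]
    simp

lemma glauber_stationary' (S : SpinSystem n q) (hn : 0 < n) {U : Finset (Fin n)}
    {τ : Cfg n q} (hpin : S.IsPinning U τ) (σ' : Cfg n q) :
    ∑ σ : Cfg n q, S.condMu U τ σ * S.glauberPin U σ σ' = S.condMu U τ σ' := by
  have key : ∀ x : Fin n,
      (∑ σ : Cfg n q, S.condMu U τ σ *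
        (if x ∈ U then (if σ' = σ then 1 else 0)
          else S.condMu (({x} : Finset (Fin n))ᶜ) σ σ')) = S.condMu U τ σ' := by
    intro x
    by_cases hx : x ∈ U
    · simp [hx, mul_ite, Finset.sum_ite_eq]
    · simp only [if_neg hx]
      rw [Finset.sum_congr rfl fun σ _ => detailed_balance' S hx σ σ', ← Finset.mul_sum]
      by_cases hμ : S.condMu U τ σ' = 0
      · rw [hμ, zero_mul]
      · have hμpos : 0 < S.condMu U τ σ' :=
          (condMu_nonneg' S U τ σ').lt_of_ne (Ne.symm hμ)
        have hw := (condWt_pos_iff' S U τ σ').1 (condWt_pos_of_condMu_pos' S hμpos)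
        have hself : 0 < S.condWt (({x} : Finset (Fin n))ᶜ) σ' σ' :=
          (condWt_pos_iff' S _ σ' σ').2 ⟨fun y _ => rfl, hw.2⟩
        have hZ : 0 < S.condZ (({x} : Finset (Fin n))ᶜ) σ' :=
          lt_of_lt_of_le hself (Finset.single_le_sum
            (fun s _ => condWt_nonneg' S _ σ' s) (Finset.mem_univ σ'))
        rw [condMu_sum_one' S hZ, mul_one]
  calc ∑ σ : Cfg n q, S.condMu U τ σ * S.glauberPin U σ σ'
      = ∑ σ : Cfg n q, ∑ x : Fin n, S.condMu U τ σ * ((n : ℝ)⁻¹ *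
          (if x ∈ U then (if σ' = σ then 1 else 0)
            else S.condMu (({x} : Finset (Fin n))ᶜ) σ σ')) := by
        refine Finset.sum_congr rfl fun σ _ => ?_
        unfold SpinSystem.glauberPin
        rw [Finset.mul_sum, Finset.mul_sum]
    _ = ∑ x : Fin n, ∑ σ : Cfg n q, S.condMu U τ σ * ((n : ℝ)⁻¹ *
          (if x ∈ U then (if σ' = σ then 1 else 0)
            else S.condMu (({x} : Finset (Fin n))ᶜ) σ σ')) := Finset.sum_comm
    _ = ∑ x : Fin n, (n : ℝ)⁻¹ * ∑ σ : Cfg n q, S.condMu U τ σ *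
          (if x ∈ U then (if σ' = σ then 1 else 0)
            else S.condMu (({x} : Finset (Fin n))ᶜ) σ σ') := by
        refine Finset.sum_congr rfl fun x _ => ?_
        rw [Finset.mul_sum]
        exact Finset.sum_congr rfl fun σ _ => by ring
    _ = ∑ _x : Fin n, (n : ℝ)⁻¹ * S.condMu U τ σ' := by
        refine Finset.sum_congr rfl fun x _ => ?_
        rw [key x]
    _ = S.condMu U τ σ' := by
        rw [Finset.sum_const, Finset.card_univ, Fintype.card_fin, nsmul_eq_mul,
          ← mul_assoc, mul_inv_cancel₀ (Nat.cast_ne_zero.2 hn.ne'), one_mul]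

end SIAuxSpin

section SIAuxMain
variable {n q : ℕ}

lemma metric_nonneg' {d : Cfg n q → Cfg n q → ℝ} (hd : IsMetricFn d) (a b : Cfg n q) :
    0 ≤ d a b := by
  have h := hd.triangle a b a
  rw [hd.refl a, hd.symm b a] at h
  linarith

lemma dHam_nonneg' (a b : Cfg n q) : 0 ≤ dHam a b := Nat.cast_nonneg _

lemma dHam_le_gamma_mul {γ : ℝ} (hγ : 1 ≤ γ) {d : Cfg n q → Cfg n q → ℝ}
    (hequiv : GammaEquiv γ d) (σ τ : Cfg n q) : dHam σ τ ≤ γ * d σ τ := by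
  have h := (hequiv σ τ).1
  have hγ0 : 0 < γ := lt_of_lt_of_le one_pos hγ
  calc dHam σ τ = γ * (1 / γ * dHam σ τ) := by field_simp
    _ ≤ γ * d σ τ := mul_le_mul_of_nonneg_left h hγ0.le

lemma dHam_le_one_of_agree {a s : Cfg n q} {x : Fin n} (h : ∀ y, y ≠ x → a y = s y) :
    dHam a s ≤ 1 := by
  have hsub : (Finset.univ.filter fun y => a y ≠ s y) ⊆ {x} := by
    intro y hy
    simp only [Finset.mem_filter] at hy
    simp only [Finset.mem_singleton]
    by_contra hyx
    exact hy.2 (h y hyx)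
  have hcard : hamming a s ≤ 1 := by
    have := Finset.card_le_card hsub
    simpa [hamming] using this
  unfold dHam
  exact_mod_cast hcard

lemma glauber_step_coupling (S : SpinSystem n q) {γ : ℝ} (hγ : 1 ≤ γ)
    {d : Cfg n q → Cfg n q → ℝ} (hd : IsMetricFn d) (hequiv : GammaEquiv γ d)
    {U : Finset (Fin n)} {x : Fin n} (hx : x ∉ U) {s : Cfg n q} (hs : 0 < S.wt s) :
    ∃ ρ : Cfg n q × Cfg n q → ℝ,
      IsCoupling ρ (S.glauberPin U s) (S.glauberPin (insert x U) s) ∧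
      ∑ p, ρ p * d p.1 p.2 ≤ γ * (n : ℝ)⁻¹ := by
  have hγ0 : (0:ℝ) < γ := lt_of_lt_of_le one_pos hγ
  have hd0 := metric_nonneg' hd
  set f : Fin n → Cfg n q → ℝ := fun z σ' =>
    if z ∈ U then (if σ' = s then 1 else 0) else S.condMu (({z} : Finset (Fin n))ᶜ) s σ'
    with hf
  set g : Fin n → Cfg n q → ℝ := fun z σ' =>
    if z ∈ insert x U then (if σ' = s then 1 else 0)
      else S.condMu (({z} : Finset (Fin n))ᶜ) s σ' with hg
  have hZx : 0 < S.condZ (({x} : Finset (Fin n))ᶜ) s := by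
    have hself : 0 < S.condWt (({x} : Finset (Fin n))ᶜ) s s :=
      (condWt_pos_iff' S _ s s).2 ⟨fun y _ => rfl, hs⟩
    exact lt_of_lt_of_le hself (Finset.single_le_sum
      (fun σ _ => condWt_nonneg' S _ s σ) (Finset.mem_univ s))
  have hcase : ∀ z : Fin n, ((n:ℝ)⁻¹ ≠ 0) → ∃ ρ : Cfg n q × Cfg n q → ℝ,
      IsCoupling ρ (f z) (g z) ∧
      ∑ p, ρ p * d p.1 p.2 ≤ (if z = x then γ else 0) := by
    intro z _
    by_cases hzx : z = x
    · subst hzx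
      rw [if_pos rfl]
      have hfz : f z = S.condMu (({z} : Finset (Fin n))ᶜ) s := by
        funext σ'; simp only [hf, if_neg hx]
      have hgz : g z = fun σ' => if σ' = s then (1:ℝ) else 0 := by
        funext σ'; simp only [hg, if_pos (Finset.mem_insert_self z U)]
      refine ⟨fun p => S.condMu (({z} : Finset (Fin n))ᶜ) s p.1 *
        (if p.2 = s then 1 else 0), ?_, ?_⟩
      · rw [hfz, hgz]
        refine ⟨fun p => mul_nonneg (condMu_nonneg' S _ s p.1) (by positivity), ?_, ?_⟩
        · intro a; simp
        · intro b
          dsimp only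
          by_cases hb : b = s <;> simp [hb, condMu_sum_one' S hZx]
      · calc ∑ p : Cfg n q × Cfg n q,
              S.condMu (({z} : Finset (Fin n))ᶜ) s p.1 * (if p.2 = s then 1 else 0) * d p.1 p.2
            = ∑ a : Cfg n q, ∑ b : Cfg n q,
              S.condMu (({z} : Finset (Fin n))ᶜ) s a * (if b = s then 1 else 0) * d a b := by
              rw [Fintype.sum_prod_type]
          _ = ∑ a : Cfg n q, S.condMu (({z} : Finset (Fin n))ᶜ) s a * d a s := by
              refine Finset.sum_congr rfl fun a _ => ?_
              rw [Finset.sum_eq_single s]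
              · simp
              · intro b _ hb; simp [hb]
              · intro hmem; exact absurd (Finset.mem_univ s) hmem
          _ ≤ ∑ a : Cfg n q, S.condMu (({z} : Finset (Fin n))ᶜ) s a * γ := by
              refine Finset.sum_le_sum fun a _ => ?_
              rcases (condMu_nonneg' S (({z} : Finset (Fin n))ᶜ) s a).lt_or_eq with hpos | hzero
              · refine mul_le_mul_of_nonneg_left ?_ hpos.le
                have hagree : ∀ y, y ≠ z → a y = s y := by
                  intro y hy
                  exact ((condWt_pos_iff' S _ s a).1
                    (condWt_pos_of_condMu_pos' S hpos)).1 y (mem_compl_singleton'.2 hy)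
                calc d a s ≤ γ * dHam a s := (hequiv a s).2
                  _ ≤ γ * 1 := mul_le_mul_of_nonneg_left (dHam_le_one_of_agree hagree) hγ0.le
                  _ = γ := mul_one γ
              · rw [← hzero, zero_mul, zero_mul]
          _ = γ := by rw [← Finset.sum_mul, condMu_sum_one' S hZx, one_mul]
    · have hfg : f z = g z := by
        funext σ'
        simp only [hf, hg, Finset.mem_insert, hzx, false_or]
      have hnnf : ∀ σ', 0 ≤ f z σ' := by
        intro σ'; simp only [hf]
        split
        · positivity
        · exact condMu_nonneg' S _ s σ'
      obtain ⟨ρ, hρ, hρc⟩ := diag_coupling hd.refl hnnf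
      rw [if_neg hzx]
      exact ⟨ρ, hfg ▸ hρ, hρc⟩
  obtain ⟨Pi, hPi, hPic⟩ := mixture_coupling (d := d)
    (w := fun _ : Fin n => (n:ℝ)⁻¹) (hw := fun _ => by positivity)
    (f := f) (g := g) (c := fun z => if z = x then γ else 0) hcase
  have e1 : (fun a => ∑ z : Fin n, (n:ℝ)⁻¹ * f z a) = S.glauberPin U s := by
    funext a
    unfold SpinSystem.glauberPin
    rw [Finset.mul_sum]
  have e2 : (fun b => ∑ z : Fin n, (n:ℝ)⁻¹ * g z b) = S.glauberPin (insert x U) s := by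
    funext b
    unfold SpinSystem.glauberPin
    rw [Finset.mul_sum]
  refine ⟨Pi, IsCoupling_congr e1 e2 hPi, hPic.trans (le_of_eq ?_)⟩
  have hz : ∀ z : Fin n, (n:ℝ)⁻¹ * (if z = x then γ else 0)
      = if z = x then (n:ℝ)⁻¹ * γ else 0 := by
    intro z; by_cases hzx : z = x <;> simp [hzx]
  rw [Finset.sum_congr rfl fun z _ => hz z,
    Finset.sum_ite_eq' Finset.univ x (fun _ => (n:ℝ)⁻¹ * γ),
    if_pos (Finset.mem_univ x), mul_comm]

lemma key_W1 (S : SpinSystem n q) {γ : ℝ} (hγ : 1 ≤ γ)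
    {d : Cfg n q → Cfg n q → ℝ} (hd : IsMetricFn d) (hequiv : GammaEquiv γ d)
    {κ : ℝ} (hκ0 : 0 < κ) (hκ1 : κ < 1)
    (hcon : ContractiveFam S (fun U _ => S.glauberPin U) d κ)
    {U : Finset (Fin n)} {τ : Cfg n q} (hpin : S.IsPinning U τ)
    {x : Fin n} (hx : x ∉ U) {a : Fin q} (ha : 0 < S.margin U τ x a) :
    W1 dHam (S.condMu U τ) (S.condMu (insert x U) (Function.update τ x a))
      ≤ γ ^ 2 / ((1 - κ) * n) := by
  have hγ0 : (0:ℝ) < γ := lt_of_lt_of_le one_pos hγ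
  have hd0 := metric_nonneg' hd
  have hn : 0 < n := x.pos
  have hn' : (0:ℝ) < (n:ℝ) := by exact_mod_cast hn
  set U' := insert x U with hU'
  set τ' := Function.update τ x a with hτ'
  have hpin' : S.IsPinning U' τ' := insert_pinning' S hx ha
  set μ1 := S.condMu U τ with hμ1
  set μ2 := S.condMu U' τ' with hμ2
  have hprob1 : IsProb μ1 := condMu_isProb' S hpin
  have hprob2 : IsProb μ2 := condMu_isProb' S hpin'
  have hsupp2 : ∀ s, μ2 s ≠ 0 → 0 < S.condWt U' τ' s := fun s hs =>
    condWt_pos_of_condMu_pos' S ((condMu_nonneg' S U' τ' s).lt_of_ne (Ne.symm hs))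
  have hstat2 : (fun b => ∑ s, μ2 s * S.glauberPin U' s b) = μ2 :=
    funext fun b => glauber_stationary' S hn hpin' b
  set W := W1 d μ1 μ2 with hWdef
  have main : W ≤ κ * W + γ * (n:ℝ)⁻¹ := by
    refine le_of_forall_pos_le_add fun ε hε => ?_
    obtain ⟨π, hπ, hπc⟩ := exists_coupling_W1_add (d := d) hprob1 hprob2 (div_pos hε hκ0)
    have hcpl1 : ∀ p : Cfg n q × Cfg n q, π p ≠ 0 →
        ∃ ρ : Cfg n q × Cfg n q → ℝ,
          IsCoupling ρ (S.glauberPin U p.1) (S.glauberPin U p.2) ∧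
          ∑ pr, ρ pr * d pr.1 pr.2 ≤ κ * d p.1 p.2 := by
      intro p hp
      have hp0 : 0 < π p := (hπ.1 p).lt_of_ne (Ne.symm hp)
      have h1 : 0 < μ1 p.1 := by
        refine lt_of_lt_of_le hp0 ?_
        rw [← hπ.2.1 p.1]
        exact Finset.single_le_sum (fun s' _ => hπ.1 (p.1, s')) (Finset.mem_univ p.2)
      have h2 : 0 < μ2 p.2 := by
        refine lt_of_lt_of_le hp0 ?_
        rw [← hπ.2.2 p.2]
        exact Finset.single_le_sum (fun s _ => hπ.1 (s, p.2)) (Finset.mem_univ p.1)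
      have hw1 : 0 < S.condWt U τ p.1 := condWt_pos_of_condMu_pos' S h1
      have hw2 : 0 < S.condWt U τ p.2 :=
        condWt_insert_pos' S hx (condWt_pos_of_condMu_pos' S h2)
      exact hcon U τ hpin p.1 p.2 hw1 hw2
    obtain ⟨Pi1, hPi1, hPi1c⟩ := mixture_coupling (d := d) (w := π) (hw := hπ.1)
      (f := fun p => S.glauberPin U p.1) (g := fun p => S.glauberPin U p.2)
      (c := fun p => κ * d p.1 p.2) hcpl1
    have e1 : (fun b => ∑ p : Cfg n q × Cfg n q, π p * S.glauberPin U p.1 b) = μ1 := by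
      funext b
      calc ∑ p : Cfg n q × Cfg n q, π p * S.glauberPin U p.1 b
          = ∑ s, ∑ s', π (s, s') * S.glauberPin U s b := by rw [Fintype.sum_prod_type]
        _ = ∑ s, μ1 s * S.glauberPin U s b := by
            refine Finset.sum_congr rfl fun s _ => ?_
            rw [← Finset.sum_mul, hπ.2.1 s]
        _ = μ1 b := glauber_stationary' S hn hpin b
    have e2 : (fun b => ∑ p : Cfg n q × Cfg n q, π p * S.glauberPin U p.2 b)
        = fun b => ∑ s, μ2 s * S.glauberPin U s b := by
      funext b
      calc ∑ p : Cfg n q × Cfg n q, π p * S.glauberPin U p.2 b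
          = ∑ s, ∑ s', π (s, s') * S.glauberPin U s' b := by rw [Fintype.sum_prod_type]
        _ = ∑ s', ∑ s, π (s, s') * S.glauberPin U s' b := Finset.sum_comm
        _ = ∑ s', μ2 s' * S.glauberPin U s' b := by
            refine Finset.sum_congr rfl fun s' _ => ?_
            rw [← Finset.sum_mul, hπ.2.2 s']
    have hPi1' : IsCoupling Pi1 μ1 (fun b => ∑ s, μ2 s * S.glauberPin U s b) :=
      IsCoupling_congr e1 e2 hPi1
    have hcpl2 : ∀ s : Cfg n q, μ2 s ≠ 0 →
        ∃ ρ : Cfg n q × Cfg n q → ℝ,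
          IsCoupling ρ (S.glauberPin U s) (S.glauberPin U' s) ∧
          ∑ pr, ρ pr * d pr.1 pr.2 ≤ γ * (n:ℝ)⁻¹ := by
      intro s hs
      have hw := (condWt_pos_iff' S U' τ' s).1 (hsupp2 s hs)
      exact glauber_step_coupling S hγ hd hequiv hx hw.2
    obtain ⟨Pi2, hPi2, hPi2c⟩ := mixture_coupling (d := d) (w := μ2) (hw := hprob2.1)
      (f := fun s => S.glauberPin U s) (g := fun s => S.glauberPin U' s)
      (c := fun _ => γ * (n:ℝ)⁻¹) hcpl2
    have hPi2' : IsCoupling Pi2 (fun b => ∑ s, μ2 s * S.glauberPin U s b) μ2 :=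
      IsCoupling_congr rfl hstat2 hPi2
    obtain ⟨χ, hχ, hχc⟩ := glue_coupling hd.triangle hPi1' hPi2'
    have hWle : W ≤ ∑ p, χ p * d p.1 p.2 := W1_le_cost hd0 hχ
    have hPi1cost : ∑ p : Cfg n q × Cfg n q, π p * (κ * d p.1 p.2) ≤ κ * (W + ε / κ) := by
      have e : ∑ p : Cfg n q × Cfg n q, π p * (κ * d p.1 p.2)
          = κ * ∑ p : Cfg n q × Cfg n q, π p * d p.1 p.2 := by
        rw [Finset.mul_sum]; exact Finset.sum_congr rfl fun p _ => by ring
      rw [e]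
      exact mul_le_mul_of_nonneg_left hπc hκ0.le
    have hPi2cost : ∑ s, μ2 s * (γ * (n:ℝ)⁻¹) = γ * (n:ℝ)⁻¹ := by
      rw [← Finset.sum_mul, hprob2.2, one_mul]
    have hfin : W ≤ κ * (W + ε/κ) + γ * (n:ℝ)⁻¹ :=
      hWle.trans (hχc.trans (add_le_add (hPi1c.trans hPi1cost)
        (hPi2c.trans (le_of_eq hPi2cost))))
    calc W ≤ κ * (W + ε/κ) + γ * (n:ℝ)⁻¹ := hfin
      _ = κ * W + γ * (n:ℝ)⁻¹ + ε := by
          rw [mul_add, mul_div_cancel₀ ε hκ0.ne']; ring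
  have hWb : W ≤ γ * (n:ℝ)⁻¹ / (1 - κ) := by
    rw [le_div_iff₀ (by linarith : (0:ℝ) < 1 - κ)]
    nlinarith [main]
  have hfinal : W1 dHam μ1 μ2 ≤ γ * W := by
    refine le_of_forall_pos_le_add fun ε hε => ?_
    obtain ⟨π, hπ, hπc⟩ := exists_coupling_W1_add (d := d) hprob1 hprob2 (div_pos hε hγ0)
    have h1 : W1 dHam μ1 μ2 ≤ ∑ p, π p * dHam p.1 p.2 :=
      W1_le_cost dHam_nonneg' hπ
    have h2 : ∑ p : Cfg n q × Cfg n q, π p * dHam p.1 p.2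
        ≤ ∑ p : Cfg n q × Cfg n q, π p * (γ * d p.1 p.2) :=
      Finset.sum_le_sum fun p _ => mul_le_mul_of_nonneg_left
        (dHam_le_gamma_mul hγ hequiv p.1 p.2) (hπ.1 p)
    have h3 : ∑ p : Cfg n q × Cfg n q, π p * (γ * d p.1 p.2)
        = γ * ∑ p : Cfg n q × Cfg n q, π p * d p.1 p.2 := by
      rw [Finset.mul_sum]; exact Finset.sum_congr rfl fun p _ => by ring
    calc W1 dHam μ1 μ2 ≤ γ * ∑ p : Cfg n q × Cfg n q, π p * d p.1 p.2 := by
          rw [← h3]; exact h1.trans h2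
      _ ≤ γ * (W + ε/γ) := mul_le_mul_of_nonneg_left hπc hγ0.le
      _ = γ * W + ε := by rw [mul_add, mul_div_cancel₀ ε hγ0.ne']
  calc W1 dHam μ1 μ2 ≤ γ * W := hfinal
    _ ≤ γ * (γ * (n:ℝ)⁻¹ / (1 - κ)) := mul_le_mul_of_nonneg_left hWb hγ0.le
    _ = γ^2 / ((1-κ) * n) := by
        field_simp

lemma influence_sum_le (S : SpinSystem n q) {U : Finset (Fin n)} {τ : Cfg n q}
    (hpin : S.IsPinning U τ) {p0 : Fin n × Fin q} (hall : S.allowed U τ p0.1 p0.2) :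
    ∑ p' : Fin n × Fin q, |S.Jmat U τ p0 p'|
      ≤ 2 * W1 dHam (S.condMu U τ)
          (S.condMu (insert p0.1 U) (Function.update τ p0.1 p0.2)) := by
  have hpin' : S.IsPinning (insert p0.1 U) (Function.update τ p0.1 p0.2) :=
    insert_pinning' S hall.1 hall.2
  refine le_of_forall_pos_le_add fun ε hε => ?_
  obtain ⟨π, hπ, hπc⟩ := exists_coupling_W1_add (d := dHam)
    (condMu_isProb' S hpin) (condMu_isProb' S hpin') (half_pos hε)
  have hm1 : ∀ (y : Fin n) (a' : Fin q), S.margin U τ y a'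
      = ∑ pr : Cfg n q × Cfg n q, π pr * (if pr.1 y = a' then 1 else 0) := by
    intro y a'
    unfold SpinSystem.margin
    calc ∑ σ : Cfg n q, (if σ y = a' then S.condMu U τ σ else 0)
        = ∑ σ : Cfg n q, (if σ y = a' then (∑ s', π (σ, s')) else 0) := by
          refine Finset.sum_congr rfl fun σ _ => by rw [hπ.2.1 σ]
      _ = ∑ σ : Cfg n q, ∑ s', (if σ y = a' then π (σ, s') else 0) := by
          refine Finset.sum_congr rfl fun σ _ => ?_
          by_cases hσ : σ y = a' <;> simp [hσ]
      _ = ∑ pr : Cfg n q × Cfg n q, (if pr.1 y = a' then π pr else 0) := by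
          rw [Fintype.sum_prod_type]
      _ = ∑ pr : Cfg n q × Cfg n q, π pr * (if pr.1 y = a' then 1 else 0) := by
          refine Finset.sum_congr rfl fun pr _ => ?_
          by_cases hpr : pr.1 y = a' <;> simp [hpr]
  have hm2 : ∀ (y : Fin n) (a' : Fin q),
      S.margin (insert p0.1 U) (Function.update τ p0.1 p0.2) y a'
      = ∑ pr : Cfg n q × Cfg n q, π pr * (if pr.2 y = a' then 1 else 0) := by
    intro y a'
    unfold SpinSystem.margin
    calc ∑ σ : Cfg n q,
          (if σ y = a' then S.condMu (insert p0.1 U) (Function.update τ p0.1 p0.2) σ else 0)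
        = ∑ σ : Cfg n q, (if σ y = a' then (∑ s, π (s, σ)) else 0) := by
          refine Finset.sum_congr rfl fun σ _ => by rw [hπ.2.2 σ]
      _ = ∑ σ : Cfg n q, ∑ s, (if σ y = a' then π (s, σ) else 0) := by
          refine Finset.sum_congr rfl fun σ _ => ?_
          by_cases hσ : σ y = a' <;> simp [hσ]
      _ = ∑ s : Cfg n q, ∑ σ : Cfg n q, (if σ y = a' then π (s, σ) else 0) := Finset.sum_comm
      _ = ∑ pr : Cfg n q × Cfg n q, (if pr.2 y = a' then π pr else 0) := by
          rw [Fintype.sum_prod_type]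
      _ = ∑ pr : Cfg n q × Cfg n q, π pr * (if pr.2 y = a' then 1 else 0) := by
          refine Finset.sum_congr rfl fun pr _ => ?_
          by_cases hpr : pr.2 y = a' <;> simp [hpr]
  have hJb : ∀ p' : Fin n × Fin q, |S.Jmat U τ p0 p'|
      ≤ ∑ pr : Cfg n q × Cfg n q, π pr *
          |(if pr.2 p'.1 = p'.2 then (1:ℝ) else 0) - (if pr.1 p'.1 = p'.2 then 1 else 0)| := by
    intro p'
    have hnn : (0:ℝ) ≤ ∑ pr : Cfg n q × Cfg n q, π pr *
        |(if pr.2 p'.1 = p'.2 then (1:ℝ) else 0) - (if pr.1 p'.1 = p'.2 then 1 else 0)| :=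
      Finset.sum_nonneg fun pr _ => mul_nonneg (hπ.1 pr) (abs_nonneg _)
    unfold SpinSystem.Jmat
    split
    · simpa using hnn
    · split
      · rw [hm2 p'.1 p'.2, hm1 p'.1 p'.2, ← Finset.sum_sub_distrib]
        refine (Finset.abs_sum_le_sum_abs _ _).trans ?_
        refine Finset.sum_le_sum fun pr _ => ?_
        rw [← mul_sub, abs_mul, abs_of_nonneg (hπ.1 pr)]
      · simpa using hnn
  calc ∑ p' : Fin n × Fin q, |S.Jmat U τ p0 p'|
      ≤ ∑ p' : Fin n × Fin q, ∑ pr : Cfg n q × Cfg n q, π pr *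
          |(if pr.2 p'.1 = p'.2 then (1:ℝ) else 0) - (if pr.1 p'.1 = p'.2 then 1 else 0)| :=
        Finset.sum_le_sum fun p' _ => hJb p'
    _ = ∑ pr : Cfg n q × Cfg n q, ∑ p' : Fin n × Fin q, π pr *
          |(if pr.2 p'.1 = p'.2 then (1:ℝ) else 0) - (if pr.1 p'.1 = p'.2 then 1 else 0)| :=
        Finset.sum_comm
    _ = ∑ pr : Cfg n q × Cfg n q, π pr * (2 * dHam pr.1 pr.2) := by
        refine Finset.sum_congr rfl fun pr _ => ?_
        rw [← Finset.mul_sum]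
        congr 1
        calc ∑ p' : Fin n × Fin q,
              |(if pr.2 p'.1 = p'.2 then (1:ℝ) else 0) - (if pr.1 p'.1 = p'.2 then 1 else 0)|
            = ∑ y : Fin n, ∑ a' : Fin q,
              |(if pr.2 y = a' then (1:ℝ) else 0) - (if pr.1 y = a' then 1 else 0)| := by
              rw [Fintype.sum_prod_type]
          _ = ∑ y : Fin n, (if pr.1 y = pr.2 y then (0:ℝ) else 2) := by
              refine Finset.sum_congr rfl fun y _ => ?_
              by_cases hy : pr.1 y = pr.2 y
              · rw [if_pos hy]
                refine Finset.sum_eq_zero fun a' _ => ?_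
                rw [hy]; simp
              · rw [if_neg hy]
                have e : ∀ a' : Fin q,
                    |(if pr.2 y = a' then (1:ℝ) else 0) - (if pr.1 y = a' then 1 else 0)|
                    = (if pr.2 y = a' then (1:ℝ) else 0) + (if pr.1 y = a' then 1 else 0) := by
                  intro a'
                  by_cases h2 : pr.2 y = a'
                  · have h1 : ¬ pr.1 y = a' := fun h1 => hy (h1.trans h2.symm)
                    rw [if_pos h2, if_neg h1]; norm_num
                  · by_cases h1 : pr.1 y = a'
                    · rw [if_neg h2, if_pos h1]; norm_num
                    · rw [if_neg h2, if_neg h1]; norm_num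
                rw [Finset.sum_congr rfl fun a' _ => e a', Finset.sum_add_distrib]
                rw [Finset.sum_ite_eq Finset.univ (pr.2 y) (fun _ => (1:ℝ)),
                  Finset.sum_ite_eq Finset.univ (pr.1 y) (fun _ => (1:ℝ))]
                norm_num
          _ = 2 * dHam pr.1 pr.2 := by
              have e : ∀ y : Fin n, (if pr.1 y = pr.2 y then (0:ℝ) else 2)
                  = 2 * (if pr.1 y ≠ pr.2 y then (1:ℝ) else 0) := by
                intro y; by_cases hy : pr.1 y = pr.2 y <;> simp [hy]
              rw [Finset.sum_congr rfl fun y _ => e y, ← Finset.mul_sum]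
              congr 1
              unfold dHam hamming
              rw [Finset.card_filter]
              push_cast
              rfl
    _ = 2 * ∑ pr : Cfg n q × Cfg n q, π pr * dHam pr.1 pr.2 := by
        rw [Finset.mul_sum]; exact Finset.sum_congr rfl fun pr _ => by ring
    _ ≤ 2 * (W1 dHam (S.condMu U τ)
          (S.condMu (insert p0.1 U) (Function.update τ p0.1 p0.2)) + ε/2) := by
        refine mul_le_mul_of_nonneg_left hπc (by norm_num)
    _ = 2 * W1 dHam (S.condMu U τ)
          (S.condMu (insert p0.1 U) (Function.update τ p0.1 p0.2)) + ε := by ring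

end SIAuxMain

/-- contraction of the Glauber dynamics with respect to a metric
`γ`-equivalent to the Hamming metric implies spectral independence with constant
`2γ²/((1-κ)n)`. -/
theorem glauber_contraction_equiv_metric_implies_SI
    {n q : ℕ} (S : SpinSystem n q) (hTC : S.TotallyConnected)
    (γ : ℝ) (hγ : 1 ≤ γ)
    (d : Cfg n q → Cfg n q → ℝ) (hd : IsMetricFn d) (hequiv : GammaEquiv γ d)
    (κ : ℝ) (hκ0 : 0 < κ) (hκ1 : κ < 1)
    (hcon : ContractiveFam S (fun U _ => S.glauberPin U) d κ) :
    S.SpectrallyIndependent (2 * γ ^ 2 / ((1 - κ) * n)) ∧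
      ∀ ε : ℝ, 0 < ε → κ ≤ 1 - ε / n → S.SpectrallyIndependent (2 * γ ^ 2 / ε) := by
  have main : S.SpectrallyIndependent (2 * γ ^ 2 / ((1 - κ) * n)) := by
    intro U τ hpin t φ hsupp hφ heig
    have hne : ∃ p : Fin n × Fin q, φ p ≠ 0 := by
      by_contra h
      push_neg at h
      exact hφ (funext h)
    obtain ⟨p1, hp1⟩ := hne
    obtain ⟨p0, -, hp0max⟩ := Finset.exists_max_image Finset.univ (fun p => |φ p|)
      ⟨p1, Finset.mem_univ p1⟩
    have hφ0 : 0 < |φ p0| :=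
      lt_of_lt_of_le (abs_pos.2 hp1) (hp0max p1 (Finset.mem_univ p1))
    have hall : S.allowed U τ p0.1 p0.2 := by
      by_contra hc
      rw [hsupp p0 hc] at hφ0
      simp at hφ0
    have hsum : ∑ p' : Fin n × Fin q, |S.Jmat U τ p0 p'| ≤ 2 * γ ^ 2 / ((1 - κ) * n) := by
      have h1 := influence_sum_le S hpin hall
      have h2 := key_W1 S hγ hd hequiv hκ0 hκ1 hcon hpin hall.1 hall.2
      calc ∑ p' : Fin n × Fin q, |S.Jmat U τ p0 p'|
          ≤ 2 * W1 dHam (S.condMu U τ)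
              (S.condMu (insert p0.1 U) (Function.update τ p0.1 p0.2)) := h1
        _ ≤ 2 * (γ ^ 2 / ((1 - κ) * n)) := by linarith
        _ = 2 * γ ^ 2 / ((1 - κ) * n) := by ring
    have heigen : |t| * |φ p0| ≤ (∑ p' : Fin n × Fin q, |S.Jmat U τ p0 p'|) * |φ p0| := by
      calc |t| * |φ p0| = |t * φ p0| := (abs_mul t (φ p0)).symm
        _ = |∑ p' : Fin n × Fin q, S.Jmat U τ p0 p' * φ p'| := by rw [heig p0]
        _ ≤ ∑ p' : Fin n × Fin q, |S.Jmat U τ p0 p' * φ p'| :=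
            Finset.abs_sum_le_sum_abs _ _
        _ ≤ ∑ p' : Fin n × Fin q, |S.Jmat U τ p0 p'| * |φ p0| := by
            refine Finset.sum_le_sum fun p' _ => ?_
            rw [abs_mul]
            exact mul_le_mul_of_nonneg_left (hp0max p' (Finset.mem_univ p')) (abs_nonneg _)
        _ = (∑ p' : Fin n × Fin q, |S.Jmat U τ p0 p'|) * |φ p0| := by rw [Finset.sum_mul]
    have ht : |t| ≤ ∑ p' : Fin n × Fin q, |S.Jmat U τ p0 p'| :=
      le_of_mul_le_mul_right heigen hφ0
    exact (le_abs_self t).trans (ht.trans hsum)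
  refine ⟨main, fun ε hε hκε => ?_⟩
  intro U τ hpin t φ hsupp hφ heig
  have h1 := main U τ hpin t φ hsupp hφ heig
  have hne : ∃ p : Fin n × Fin q, φ p ≠ 0 := by
    by_contra h
    push_neg at h
    exact hφ (funext h)
  obtain ⟨p1, hp1⟩ := hne
  have hn : 0 < n := p1.1.pos
  have hn' : (0:ℝ) < (n:ℝ) := by exact_mod_cast hn
  have hεn : ε ≤ (1 - κ) * n := by
    have h2 : ε / n ≤ 1 - κ := by linarith
    calc ε = ε / n * n := by field_simp
      _ ≤ (1 - κ) * n := mul_le_mul_of_nonneg_right h2 hn'.le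
  have hmono : 2 * γ ^ 2 / ((1 - κ) * n) ≤ 2 * γ ^ 2 / ε :=
    div_le_div_of_nonneg_left (by positivity) hε hεn
  linarith
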